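/- arXiv:2211.08929 — 4 statements merged into one kernel-verified Lean document; each statement's English description precedes it below -/
import Mathlib

section
/- Let f ∈ L^∞_{−β}(ℝⁿ) (i.e. ess sup Λ(x)^{−β}|f(x)| < ∞), g ∈ L¹_β(ℝⁿ) and G ∈ L¹_β(ℝⁿ). Then the convolutions are absolutely convergent and associativity holds: f * (g * G) = (f * g) * G almost everywhere. -/
/-!
Write `⟨x⟩ = √(1 + ‖x‖²)`. Since `1 + ‖u + v‖² ≤ 2 (1 + ‖u‖²)(1 + ‖v‖²)`, Peetre's inequality
`⟨u + v⟩ ≤ √2 ⟨u⟩⟨v⟩` holds, and applying it twice to `x - y = x + (z - y) + (-z)` gives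
`⟨x - y⟩^β ≤ 2^β ⟨x⟩^β ⟨y - z⟩^β ⟨z⟩^β`. Hence for fixed `x` the triple integrand
`|f (x - y) g (y - z) G z|` is dominated by a constant times the convolution integrand of the
weighted functions `|g| ⟨·⟩^β` and `|G| ⟨·⟩^β`, which is integrable on the product. Associativity
is then Fubini.
-/

open MeasureTheory

section JapaneseBracket

variable {E : Type*} [SeminormedAddCommGroup E]

noncomputable def japaneseBracket (x : E) : ℝ := √(1 + ‖x‖ ^ 2)

theorem japaneseBracket_nonneg (x : E) : 0 ≤ japaneseBracket x := Real.sqrt_nonneg _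

theorem japaneseBracket_neg (x : E) : japaneseBracket (-x) = japaneseBracket x := by
  rw [japaneseBracket, japaneseBracket, norm_neg]

theorem japaneseBracket_sub_comm (x y : E) : japaneseBracket (x - y) = japaneseBracket (y - x) := by
  rw [japaneseBracket, japaneseBracket, norm_sub_rev]

theorem one_add_norm_add_sq_le (u v : E) :
    1 + ‖u + v‖ ^ 2 ≤ 2 * ((1 + ‖u‖ ^ 2) * (1 + ‖v‖ ^ 2)) := by
  have h := norm_add_le u v
  nlinarith [sq_nonneg (‖u‖ - ‖v‖), sq_nonneg (‖u‖ * ‖v‖), norm_nonneg u, norm_nonneg v,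
    norm_nonneg (u + v)]

theorem japaneseBracket_add_le (u v : E) :
    japaneseBracket (u + v) ≤ √2 * japaneseBracket u * japaneseBracket v := by
  calc japaneseBracket (u + v) ≤ √(2 * ((1 + ‖u‖ ^ 2) * (1 + ‖v‖ ^ 2))) :=
        Real.sqrt_le_sqrt (one_add_norm_add_sq_le u v)
    _ = √2 * japaneseBracket u * japaneseBracket v := by
        rw [Real.sqrt_mul zero_le_two, Real.sqrt_mul (by positivity), mul_assoc]; rfl

theorem japaneseBracket_sub_le (x y z : E) :
    japaneseBracket (x - y) ≤
      2 * japaneseBracket x * japaneseBracket (y - z) * japaneseBracket z := by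
  have hx := japaneseBracket_nonneg x
  calc japaneseBracket (x - y) = japaneseBracket (x + ((z - y) + -z)) := by congr 1; abel
    _ ≤ √2 * japaneseBracket x * japaneseBracket ((z - y) + -z) := japaneseBracket_add_le _ _
    _ ≤ √2 * japaneseBracket x * (√2 * japaneseBracket (z - y) * japaneseBracket (-z)) := by
        gcongr; exact japaneseBracket_add_le _ _
    _ = 2 * japaneseBracket x * japaneseBracket (y - z) * japaneseBracket z := by
        rw [japaneseBracket_neg, japaneseBracket_sub_comm z y]
        linear_combination (japaneseBracket x * japaneseBracket (y - z) * japaneseBracket z) *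
          Real.mul_self_sqrt zero_le_two

theorem japaneseBracket_sub_rpow_le {β : ℝ} (hβ : 0 ≤ β) (x y z : E) :
    japaneseBracket (x - y) ^ β ≤
      2 ^ β * japaneseBracket x ^ β * japaneseBracket (y - z) ^ β * japaneseBracket z ^ β := by
  have h := fun w : E => japaneseBracket_nonneg w
  calc japaneseBracket (x - y) ^ β
      ≤ (2 * japaneseBracket x * japaneseBracket (y - z) * japaneseBracket z) ^ β :=
        Real.rpow_le_rpow (h _) (japaneseBracket_sub_le x y z) hβ
    _ = _ := by
        have h2x := mul_nonneg zero_le_two (h x)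
        rw [Real.mul_rpow (mul_nonneg h2x (h _)) (h _), Real.mul_rpow h2x (h _),
          Real.mul_rpow zero_le_two (h _)]

end JapaneseBracket

section Convolution

variable {E 𝕜 : Type*} [NormedAddCommGroup E] [MeasurableSpace E] [MeasurableAdd₂ E]
  [MeasurableNeg E] {μ : Measure E} [SFinite μ] [μ.IsAddRightInvariant] [RCLike 𝕜]

theorem integrable_mul_convolution_integrand_of_weighted {f g G : E → 𝕜} {β C : ℝ}
    (hβ : 0 ≤ β) (hf : AEStronglyMeasurable f μ)
    (hfβ : ∀ᵐ x ∂μ, ‖f x‖ ≤ C * japaneseBracket x ^ β)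
    (hg : AEStronglyMeasurable g μ) (hgβ : Integrable (fun x => ‖g x‖ * japaneseBracket x ^ β) μ)
    (hG : AEStronglyMeasurable G μ) (hGβ : Integrable (fun x => ‖G x‖ * japaneseBracket x ^ β) μ)
    (x : E) :
    Integrable (fun p : E × E => f (x - p.1) * (g (p.1 - p.2) * G p.2)) (μ.prod μ) := by
  set w : E → ℝ := fun x => japaneseBracket x ^ β
  have hw : ∀ x, 0 ≤ w x := fun x => Real.rpow_nonneg (japaneseBracket_nonneg x) β
  have hsub := quasiMeasurePreserving_sub_left_of_right_invariant μ x
  have hmaj : Integrable (fun p : E × E => (‖G p.2‖ * w p.2) * (‖g (p.1 - p.2)‖ * w (p.1 - p.2)))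
      (μ.prod μ) :=
    hGβ.convolution_integrand (ContinuousLinearMap.mul ℝ ℝ) hgβ
  have hmeas : AEStronglyMeasurable (fun p : E × E => f (x - p.1) * (g (p.1 - p.2) * G p.2))
      (μ.prod μ) :=
    (hf.comp_quasiMeasurePreserving hsub).comp_fst.mul
      ((hG.convolution_integrand (ContinuousLinearMap.mul 𝕜 𝕜) hg).congr
        (.of_forall fun p => mul_comm _ _))
  have hfx : ∀ᵐ p ∂μ.prod μ, ‖f (x - p.1)‖ ≤ max C 0 * w (x - p.1) :=
    Measure.quasiMeasurePreserving_fst.ae (hsub.ae (hfβ.mono fun y hy =>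
      hy.trans (mul_le_mul_of_nonneg_right (le_max_left _ _) (hw y))))
  refine hmaj.const_mul (max C 0 * (2 ^ β * w x)) |>.mono' hmeas ?_
  filter_upwards [hfx] with p hp
  have hgG : 0 ≤ ‖g (p.1 - p.2)‖ * ‖G p.2‖ := by positivity
  calc ‖f (x - p.1) * (g (p.1 - p.2) * G p.2)‖
      = ‖f (x - p.1)‖ * (‖g (p.1 - p.2)‖ * ‖G p.2‖) := by rw [norm_mul, norm_mul]
    _ ≤ max C 0 * w (x - p.1) * (‖g (p.1 - p.2)‖ * ‖G p.2‖) := by gcongr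
    _ ≤ max C 0 * (2 ^ β * w x * w (p.1 - p.2) * w p.2) * (‖g (p.1 - p.2)‖ * ‖G p.2‖) := by
        gcongr
        exact japaneseBracket_sub_rpow_le hβ x p.1 p.2
    _ = _ := by ring

end Convolution

theorem integral_mul_integral_mul_swap {α β 𝕜 : Type*} [MeasurableSpace α] [MeasurableSpace β]
    {μ : Measure α} {ν : Measure β} [SFinite μ] [SFinite ν] [RCLike 𝕜]
    {F : α → 𝕜} {K : α → β → 𝕜} {H : β → 𝕜}
    (h : Integrable (fun p : α × β => F p.1 * (K p.1 p.2 * H p.2)) (μ.prod ν)) :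
    ∫ y, F y * ∫ z, K y z * H z ∂ν ∂μ = ∫ z, (∫ y, F y * K y z ∂μ) * H z ∂ν := by
  calc ∫ y, F y * ∫ z, K y z * H z ∂ν ∂μ = ∫ y, ∫ z, F y * (K y z * H z) ∂ν ∂μ := by
        simp_rw [integral_const_mul]
    _ = ∫ z, ∫ y, F y * (K y z * H z) ∂μ ∂ν := integral_integral_swap h
    _ = ∫ z, (∫ y, F y * K y z ∂μ) * H z ∂ν := by
        simp_rw [← mul_assoc, integral_mul_const]

/-- for `f ∈ L^∞_{−β}`, `g, G ∈ L¹_β` the convolutions converge absolutely and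
`f * (g * G) = (f * g) * G`. -/
theorem stmt5 (n : ℕ) (β : ℝ) (hβ : 0 ≤ β)
    (Λ : EuclideanSpace ℝ (Fin n) → ℝ)
    (hΛ : ∀ x, Λ x = (1 + ‖x‖ ^ 2) ^ ((1 : ℝ) / 2))
    (f g G : EuclideanSpace ℝ (Fin n) → ℂ)
    (hf : AEStronglyMeasurable f (volume : Measure (EuclideanSpace ℝ (Fin n))))
    (hfβ : ∃ C : ℝ, ∀ᵐ x ∂(volume : Measure (EuclideanSpace ℝ (Fin n))), ‖f x‖ ≤ C * Λ x ^ β)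
    (hg : Integrable g) (hgβ : Integrable (fun x => ‖g x‖ * Λ x ^ β))
    (hG : Integrable G) (hGβ : Integrable (fun x => ‖G x‖ * Λ x ^ β)) :
    (∀ x : EuclideanSpace ℝ (Fin n),
      Integrable (fun p : EuclideanSpace ℝ (Fin n) × EuclideanSpace ℝ (Fin n) =>
        f (x - p.1) * (g (p.1 - p.2) * G p.2))) ∧
    ∀ x : EuclideanSpace ℝ (Fin n),
      ∫ y, f (x - y) * ∫ z, g (y - z) * G z = ∫ z, (∫ y, f (x - y) * g (y - z)) * G z := by
  obtain ⟨C, hC⟩ := hfβ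
  obtain rfl : Λ = japaneseBracket :=
    funext fun x => by rw [hΛ, japaneseBracket, Real.sqrt_eq_rpow]
  have hInt := integrable_mul_convolution_integrand_of_weighted hβ hf hC
    hg.aestronglyMeasurable hgβ hG.aestronglyMeasurable hGβ
  exact ⟨hInt, fun x => integral_mul_integral_mul_swap (hInt x)⟩
end

section
/- Every locally bounded, measurable submultiplicative function h: ℝⁿ → (0,∞) is exponentially bounded: there exist constants a, b > 0 such that h(x) ≤ a·e^{b|x|} for all x ∈ ℝⁿ. -/
/-- every locally bounded measurable submultiplicative function is
exponentially bounded. -/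
theorem stmt8 (n : ℕ) (h : EuclideanSpace ℝ (Fin n) → ℝ) (c : ℝ) (hc : 1 ≤ c)
    (hpos : ∀ x, 0 < h x)
    (hmeas : Measurable h)
    (hloc : ∀ K : Set (EuclideanSpace ℝ (Fin n)), IsCompact K → ∃ M : ℝ, ∀ x ∈ K, h x ≤ M)
    (hsub : ∀ x y, h (x + y) ≤ c * h x * h y) :
    ∃ a b : ℝ, 0 < a ∧ 0 < b ∧ ∀ x, h x ≤ a * Real.exp (b * ‖x‖) := by
  obtain ⟨M, hM⟩ := hloc (Metric.closedBall 0 1) (isCompact_closedBall 0 1)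
  set N : ℝ := max M 2 with hN
  set A : ℝ := c * N with hA
  have hN2 : (2:ℝ) ≤ N := le_max_right _ _
  have hA2 : (2:ℝ) ≤ A := by
    calc (2:ℝ) ≤ N := hN2
    _ = 1 * N := (one_mul _).symm
    _ ≤ c * N := by apply mul_le_mul_of_nonneg_right hc; linarith
  have hA1 : (1:ℝ) < A := by linarith
  have hA0 : (0:ℝ) < A := by linarith
  have hball : ∀ x : EuclideanSpace ℝ (Fin n), ‖x‖ ≤ 1 → h x ≤ N := by
    intro x hx
    have : x ∈ Metric.closedBall (0 : EuclideanSpace ℝ (Fin n)) 1 := by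
      simpa [Metric.mem_closedBall, dist_zero_right] using hx
    exact le_trans (hM x this) (le_max_left _ _)
  -- induction: ‖x‖ ≤ k+1 → h x ≤ N * A^k
  have key : ∀ k : ℕ, ∀ x : EuclideanSpace ℝ (Fin n), ‖x‖ ≤ (k+1 : ℝ) → h x ≤ N * A ^ k := by
    intro k
    induction k with
    | zero =>
      intro x hx
      simpa using hball x (by simpa using hx)
    | succ k ih =>
      intro x hx
      by_cases hcase : ‖x‖ ≤ (k+1 : ℝ)
      · calc h x ≤ N * A ^ k := ih x hcase
        _ ≤ N * A ^ (k+1) := by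
            apply mul_le_mul_of_nonneg_left
              (pow_le_pow_right₀ (le_of_lt hA1) (by omega)) (by linarith)
      · push_neg at hcase
        have hxpos : (0:ℝ) < ‖x‖ := lt_trans (by positivity) hcase
        set t : ℝ := (k+1) / ‖x‖ with ht
        have ht0 : 0 < t := by positivity
        have ht1 : t < 1 := by rw [ht, div_lt_one hxpos]; exact hcase
        set y := t • x with hy
        set z := (1 - t) • x with hz
        have hyz : x = y + z := by
          rw [hy, hz, ← add_smul]; ring_nf; simp
        have hny : ‖y‖ = (k+1:ℝ) := by
          rw [hy, norm_smul, Real.norm_eq_abs, abs_of_pos ht0, ht,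
            div_mul_cancel₀ _ (ne_of_gt hxpos)]
        have hnz : ‖z‖ ≤ 1 := by
          rw [hz, norm_smul, Real.norm_eq_abs, abs_of_pos (by linarith), ht]
          have : (1 - (k+1) / ‖x‖) * ‖x‖ = ‖x‖ - (k+1) := by field_simp
          rw [this]
          push_cast at hx ⊢
          linarith
        have h1 : h y ≤ N * A ^ k := ih y (le_of_eq hny)
        have h2 : h z ≤ N := hball z hnz
        have hApow : (0:ℝ) < A ^ k := by positivity
        calc h x = h (y + z) := by rw [← hyz]
        _ ≤ c * h y * h z := hsub y z
        _ ≤ c * (N * A ^ k) * N := by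
            apply mul_le_mul _ h2 (le_of_lt (hpos z)) (by positivity)
            exact mul_le_mul_of_nonneg_left h1 (by linarith)
        _ = N * A ^ (k+1) := by rw [hA]; ring
  refine ⟨N, Real.log A, by linarith, Real.log_pos hA1, fun x => ?_⟩
  have hfloor : ‖x‖ ≤ (⌊‖x‖⌋₊ + 1 : ℝ) := le_of_lt (Nat.lt_floor_add_one _)
  have h1 : h x ≤ N * A ^ ⌊‖x‖⌋₊ := key ⌊‖x‖⌋₊ x hfloor
  have h2 : (A:ℝ) ^ (⌊‖x‖⌋₊ : ℕ) ≤ Real.exp (Real.log A * ‖x‖) := by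
    have : (A:ℝ) ^ (⌊‖x‖⌋₊ : ℕ) = Real.exp (Real.log A * ⌊‖x‖⌋₊) := by
      rw [mul_comm, Real.exp_nat_mul, Real.exp_log hA0]
    rw [this, Real.exp_le_exp]
    exact mul_le_mul_of_nonneg_left (Nat.floor_le (norm_nonneg x))
      (le_of_lt (Real.log_pos hA1))
  calc h x ≤ N * A ^ ⌊‖x‖⌋₊ := h1
  _ ≤ N * Real.exp (Real.log A * ‖x‖) := by
      apply mul_le_mul_of_nonneg_left h2 (by linarith)
end

section
/- Let ρ be a finite Borel measure on ℝⁿ and f(x) = ∫ e^{x·ξ} ρ(dξ). Suppose g: ℝⁿ → [1,∞) is locally bounded submultiplicative with directional exponents β(ω), and suppose 0 ≤ f(x) ≤ g(x) for all x. Then the support of ρ is contained in Π_g = {ξ : ξ·ω ≤ β(ω) for all ω ∈ S^{n−1}}. -/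
open Filter MeasureTheory Real
open scoped RealInnerProductSpace

/-!
If `ξ⁰ ∈ supp ρ` and `a < ⟪ξ⁰, ω⟫`, the half-space `U = {ξ | a < ⟪ω, ξ⟫}` is an open
neighbourhood of `ξ⁰`, so `ρ U > 0`, and by Markov's inequality
`g (r • ω) ≥ f (r • ω) ≥ ρ(U) e^{r a}`. Taking `log`, dividing by `r` and letting `r → ∞`
gives `a ≤ β ω`.
-/

lemma measureReal_halfSpace_mul_exp_le_integral_exp_inner {E : Type*} [NormedAddCommGroup E]
    [InnerProductSpace ℝ E] [MeasurableSpace E] (ρ : Measure E) [IsFiniteMeasure ρ]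
    (ω : E) (a : ℝ) {r : ℝ} (hr : 0 ≤ r) (hint : Integrable (fun ξ => exp ⟪r • ω, ξ⟫) ρ) :
    ρ.real {ξ | a < ⟪ω, ξ⟫} * exp (r * a) ≤ ∫ ξ, exp ⟪r • ω, ξ⟫ ∂ρ := by
  have hsub : {ξ | a < ⟪ω, ξ⟫} ⊆ {ξ | exp (r * a) ≤ exp ⟪r • ω, ξ⟫} := fun ξ hξ => by
    rw [Set.mem_ofPred_eq, exp_le_exp, real_inner_smul_left]
    exact mul_le_mul_of_nonneg_left (le_of_lt hξ) hr
  calc ρ.real {ξ | a < ⟪ω, ξ⟫} * exp (r * a)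
      ≤ exp (r * a) * ρ.real {ξ | exp (r * a) ≤ exp ⟪r • ω, ξ⟫} := by
        rw [mul_comm]
        exact mul_le_mul_of_nonneg_left (measureReal_mono hsub) (exp_pos _).le
    _ ≤ ∫ ξ, exp ⟪r • ω, ξ⟫ ∂ρ :=
        mul_meas_ge_le_integral_of_nonneg (.of_forall fun _ => (exp_pos _).le) hint _

lemma le_of_mul_exp_le_of_tendsto_log_div {h : ℝ → ℝ} {m a b : ℝ} (hm : 0 < m)
    (hle : ∀ᶠ r in atTop, m * exp (r * a) ≤ h r)
    (hlim : Tendsto (fun r => log (h r) / r) atTop (nhds b)) : a ≤ b := by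
  have hlower : ∀ᶠ r in atTop, log m / r + a ≤ log (h r) / r := by
    filter_upwards [hle, eventually_gt_atTop 0] with r hr hr0
    have hlog := log_le_log (by positivity) hr
    rw [log_mul hm.ne' (exp_ne_zero _), log_exp] at hlog
    rw [div_add' _ _ _ hr0.ne', div_le_div_iff_of_pos_right hr0]
    linarith
  have hlower_lim : Tendsto (fun r => log m / r + a) atTop (nhds a) := by
    simpa using (tendsto_const_nhds.div_atTop tendsto_id).add (tendsto_const_nhds (x := a))
  exact le_of_tendsto_of_tendsto hlower_lim hlim hlower

theorem stmt13_general (n : ℕ) (ρ : Measure (EuclideanSpace ℝ (Fin n))) [IsFiniteMeasure ρ]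
    (g : EuclideanSpace ℝ (Fin n) → ℝ)
    (β : EuclideanSpace ℝ (Fin n) → ℝ)
    (hβ : ∀ ω : EuclideanSpace ℝ (Fin n), ‖ω‖ = 1 →
      Tendsto (fun r : ℝ => Real.log (g (r • ω)) / r) atTop (nhds (β ω)))
    (f : EuclideanSpace ℝ (Fin n) → ℝ)
    (hint : ∀ x, Integrable (fun ξ => Real.exp (⟪x, ξ⟫)) ρ)
    (hf : ∀ x, f x = ∫ ξ, Real.exp (⟪x, ξ⟫) ∂ρ)
    (hbound : ∀ x, f x ≤ g x) :
    ∀ ξ : EuclideanSpace ℝ (Fin n),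
      (∀ U : Set (EuclideanSpace ℝ (Fin n)), IsOpen U → ξ ∈ U → 0 < ρ U) →
      ∀ ω : EuclideanSpace ℝ (Fin n), ‖ω‖ = 1 → ⟪ξ, ω⟫ ≤ β ω := by
  intro ξ hξ ω hω
  refine le_of_forall_pos_le_add fun ε hε => ?_
  set U := {η | ⟪ξ, ω⟫ - ε < ⟪ω, η⟫}
  have hU : 0 < ρ.real U := by
    refine ENNReal.toReal_pos (hξ U ?_ ?_).ne' (measure_ne_top ρ U)
    · exact isOpen_lt continuous_const (continuous_const.inner continuous_id)
    · simp only [U, Set.mem_ofPred_eq, real_inner_comm ω ξ]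
      linarith
  have hgrowth : ∀ᶠ r in atTop, ρ.real U * exp (r * (⟪ξ, ω⟫ - ε)) ≤ g (r • ω) := by
    filter_upwards [eventually_ge_atTop 0] with r hr
    calc _ ≤ ∫ η, exp ⟪r • ω, η⟫ ∂ρ :=
          measureReal_halfSpace_mul_exp_le_integral_exp_inner ρ ω _ hr (hint _)
      _ = f (r • ω) := (hf _).symm
      _ ≤ g (r • ω) := hbound _
  linarith [le_of_mul_exp_le_of_tendsto_log_div hU hgrowth (hβ ω hω)]

/-- if `f(x) = ∫ e^{x·ξ} ρ(dξ)` (a finite measure's bilateral Laplace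
transform, assumed finite) satisfies `0 ≤ f ≤ g` for a locally bounded submultiplicative
`g ≥ 1` with directional exponents `β(ω)`, then `supp ρ ⊆ Π_g`. -/
theorem stmt13 (n : ℕ) (ρ : Measure (EuclideanSpace ℝ (Fin n))) [IsFiniteMeasure ρ]
    (g : EuclideanSpace ℝ (Fin n) → ℝ) (c : ℝ) (hc : 1 ≤ c)
    (hge : ∀ x, 1 ≤ g x)
    (hloc : ∀ K : Set (EuclideanSpace ℝ (Fin n)), IsCompact K → ∃ M : ℝ, ∀ x ∈ K, g x ≤ M)
    (hsub : ∀ x y, g (x + y) ≤ c * g x * g y)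
    (β : EuclideanSpace ℝ (Fin n) → ℝ)
    (hβ : ∀ ω : EuclideanSpace ℝ (Fin n), ‖ω‖ = 1 →
      Tendsto (fun r : ℝ => Real.log (g (r • ω)) / r) atTop (nhds (β ω)))
    (f : EuclideanSpace ℝ (Fin n) → ℝ)
    (hint : ∀ x, Integrable (fun ξ => Real.exp (⟪x, ξ⟫)) ρ)
    (hf : ∀ x, f x = ∫ ξ, Real.exp (⟪x, ξ⟫) ∂ρ)
    (hbound : ∀ x, f x ≤ g x) :
    ∀ ξ : EuclideanSpace ℝ (Fin n),
      (∀ U : Set (EuclideanSpace ℝ (Fin n)), IsOpen U → ξ ∈ U → 0 < ρ U) →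
      ∀ ω : EuclideanSpace ℝ (Fin n), ‖ω‖ = 1 → ⟪ξ, ω⟫ ≤ β ω :=
  stmt13_general n ρ g β hβ f hint hf hbound
end

section
/- Let ψ: ℝⁿ → ℂ be a continuous negative definite function (characteristic exponent of a Lévy process) with ψ(0) = 0, and suppose its zero set {ξ : ψ(ξ) = 0} contains a nonzero point ξ⁰. Then f(x) = ½(1 + cos(ξ⁰·x)) is a non-constant, nonnegative, bounded smooth function satisfying ψ(D)f = 0, where ψ(D) acts on the exponentials e^{±iξ⁰·x} by multiplication with ψ(∓ξ⁰) and on constants by ψ(0) = 0, and the zero set of ψ is a subgroup of (ℝⁿ,+) so that ψ(−ξ⁰) = 0 as well. -/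
open scoped RealInnerProductSpace

/-- if `ψ` (hermitian: `ψ(−ξ) = conj ψ(ξ)`, as is every characteristic
exponent) vanishes at `0` and at some nonzero `ξ⁰`, then also `ψ(−ξ⁰) = 0` and
`f(x) = ½(1 + cos(ξ⁰·x))` is a non-constant, nonnegative, bounded, smooth function with
`ψ(D) f = ½ψ(0) + ¼ψ(ξ⁰)e^{iξ⁰·x} + ¼ψ(−ξ⁰)e^{−iξ⁰·x} = 0`. -/
theorem stmt14 (n : ℕ) (ψ : EuclideanSpace ℝ (Fin n) → ℂ) (hψ : Continuous ψ)
    (hherm : ∀ ξ, ψ (-ξ) = starRingEnd ℂ (ψ ξ))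
    (h0 : ψ 0 = 0)
    (ξ₀ : EuclideanSpace ℝ (Fin n)) (hξ₀ : ξ₀ ≠ 0) (hξ₀0 : ψ ξ₀ = 0)
    (f : EuclideanSpace ℝ (Fin n) → ℝ)
    (hf : ∀ x, f x = (1 + Real.cos (⟪ξ₀, x⟫)) / 2) :
    ψ (-ξ₀) = 0 ∧
    (¬ ∀ x y, f x = f y) ∧
    (∀ x, 0 ≤ f x) ∧ (∀ x, f x ≤ 1) ∧
    ContDiff ℝ (⊤ : ℕ∞) f ∧
    (∀ x : EuclideanSpace ℝ (Fin n),
      ψ 0 / 2 + ψ ξ₀ / 4 * Complex.exp (Complex.I * (⟪ξ₀, x⟫ : ℝ))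
        + ψ (-ξ₀) / 4 * Complex.exp (-(Complex.I * (⟪ξ₀, x⟫ : ℝ))) = 0) := by
  have hneg : ψ (-ξ₀) = 0 := by rw [hherm, hξ₀0, map_zero]
  refine ⟨hneg, ?_, ?_, ?_, ?_, ?_⟩
  · intro h
    have hnorm : (⟪ξ₀, ξ₀⟫ : ℝ) ≠ 0 := by
      rw [real_inner_self_eq_norm_sq]
      exact pow_ne_zero _ (norm_ne_zero_iff.mpr hξ₀)
    have h1 := h ((Real.pi / ⟪ξ₀, ξ₀⟫) • ξ₀) 0
    rw [hf, hf] at h1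
    rw [real_inner_smul_right, inner_zero_right] at h1
    rw [show Real.pi / (⟪ξ₀, ξ₀⟫ : ℝ) * ⟪ξ₀, ξ₀⟫ = Real.pi from div_mul_cancel₀ _ hnorm] at h1
    simp [Real.cos_pi] at h1
  · intro x
    rw [hf]
    have := Real.neg_one_le_cos (⟪ξ₀, x⟫)
    linarith
  · intro x
    rw [hf]
    have := Real.cos_le_one (⟪ξ₀, x⟫)
    linarith
  · have : f = fun x => (1 + Real.cos (⟪ξ₀, x⟫)) / 2 := funext hf
    rw [this]
    exact ContDiff.div_const (ContDiff.add contDiff_const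
      (Real.contDiff_cos.comp (contDiff_const.inner ℝ contDiff_id))) 2
  · intro x
    rw [h0, hξ₀0, hneg]
    ring
end
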